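/- arXiv:2012.15736 — 2 statements merged into one kernel-verified Lean document; each statement's English description precedes it below -/
import Mathlib

section
/- Let K/k be a separable algebraic field extension and let A be a reduced commutative k-algebra. Then the tensor product K ⊗_k A is a reduced ring. -/
/-!
A nilpotent element of `A ⊗[k] K` vanishes as soon as its image in `κ(p) ⊗[k] K` vanishes for
every prime `p` of `A`: expanding along a `k`-basis of `K`, each coefficient then lies in every
prime, i.e. in the nilradical of `A`, which is zero. So it suffices to treat `A = F` a field.
Every finitely generated subalgebra of `K` lies in a finite separable subextension `E`, which is
formally unramified over `k`; hence `F ⊗[k] E` is formally unramified and essentially of finite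
type over the field `F`, so reduced, and `F ⊗[k] K` is reduced because `F` is flat over `k`.
-/

open scoped TensorProduct

namespace TensorProduct

variable {R M N : Type*} [CommSemiring R] [AddCommMonoid M] [Module R M]
  [AddCommMonoid N] [Module R N]

lemma equivFinsuppOfBasisRight_rTensor {P κ : Type*} [AddCommMonoid P] [Module R P]
    [DecidableEq κ] (𝒞 : Module.Basis κ R N) (f : M →ₗ[R] P) (x : M ⊗[R] N) (i : κ) :
    equivFinsuppOfBasisRight 𝒞 (f.rTensor N x) i = f (equivFinsuppOfBasisRight 𝒞 x i) := by
  induction x <;> simp_all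

lemma eq_zero_of_forall_rTensor_eq_zero [Module.Free R N] {ι : Type*} {P : ι → Type*}
    [∀ j, AddCommMonoid (P j)] [∀ j, Module R (P j)] (f : ∀ j, M →ₗ[R] P j)
    (hf : ∀ m, (∀ j, f j m = 0) → m = 0) (x : M ⊗[R] N) (hx : ∀ j, (f j).rTensor N x = 0) :
    x = 0 := by
  classical
  let 𝒞 := Module.Free.chooseBasis R N
  refine (equivFinsuppOfBasisRight 𝒞).injective (Finsupp.ext fun i ↦ hf _ fun j ↦ ?_)
  rw [← equivFinsuppOfBasisRight_rTensor, hx j, map_zero, Finsupp.zero_apply]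

end TensorProduct

lemma isReduced_tensorProduct_of_forall_residueField {k A K : Type*} [CommRing k] [CommRing A]
    [Algebra k A] [IsReduced A] [CommRing K] [Algebra k K] [Module.Free k K]
    (h : ∀ (p : Ideal A) [p.IsPrime], IsReduced (p.ResidueField ⊗[k] K)) :
    IsReduced (A ⊗[k] K) := by
  let toResidueField (p : PrimeSpectrum A) : A →ₐ[k] p.asIdeal.ResidueField :=
    IsScalarTower.toAlgHom k A _
  refine ⟨fun x hx ↦ TensorProduct.eq_zero_of_forall_rTensor_eq_zero
    (fun p ↦ (toResidueField p).toLinearMap) (fun a ha ↦ ?_) x fun p ↦ ?_⟩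
  · refine IsReduced.eq_zero a (nilpotent_iff_mem_prime.mpr fun p hp ↦ ?_)
    exact Ideal.algebraMap_residueField_eq_zero.mp (ha ⟨p, hp⟩)
  · exact (hx.map (Algebra.TensorProduct.map (toResidueField p) (AlgHom.id k K))).eq_zero

lemma isReduced_tensorProduct_of_isSeparable (k F K : Type*) [Field k] [Field F] [Algebra k F]
    [Field K] [Algebra k K] [Algebra.IsSeparable k K] : IsReduced (F ⊗[k] K) := by
  refine IsReduced.tensorProduct_of_flat_of_forall_fg fun B ⟨s, hs⟩ ↦ ?_
  let E := IntermediateField.adjoin k (s : Set K)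
  have : FiniteDimensional k E := IntermediateField.finiteDimensional_adjoin
    fun x _ ↦ Algebra.IsSeparable.isIntegral k x
  have : Algebra.IsSeparable k E := Algebra.isSeparable_tower_bot_of_isSeparable k E K
  have : Algebra.FormallyUnramified k E := .of_isSeparable k E
  have : IsReduced (F ⊗[k] E) := Algebra.FormallyUnramified.isReduced_of_field F (F ⊗[k] E)
  have hBE : B ≤ E.toSubalgebra := hs ▸ IntermediateField.algebra_adjoin_le_adjoin k _
  exact isReduced_of_injective
    (Algebra.TensorProduct.map (AlgHom.id F F) (Subalgebra.inclusion hBE))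
    (Module.Flat.lTensor_preserves_injective_linearMap _ (Subalgebra.inclusion_injective hBE))

/-- If `K/k` is a separable (algebraic) field extension and `A` is a reduced commutative
`k`-algebra, then `K ⊗[k] A` is a reduced ring. -/
theorem tensorProduct_isReduced_of_separable
    (k K A : Type*) [Field k] [Field K] [Algebra k K] [Algebra.IsSeparable k K]
    [CommRing A] [Algebra k A] [IsReduced A] :
    IsReduced (K ⊗[k] A) := by
  have : IsReduced (A ⊗[k] K) := isReduced_tensorProduct_of_forall_residueField fun p _ ↦
    isReduced_tensorProduct_of_isSeparable k p.ResidueField K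
  exact isReduced_of_injective (Algebra.TensorProduct.comm k K A)
    (Algebra.TensorProduct.comm k K A).injective
end

section
/- Let G be a group, G' a subgroup of finite index, and A' a G'-module. Then the induced G-module Ind_{G'}^G A' = ℤ[G] ⊗_{ℤ[G']} A' is isomorphic, as a G-module, to the coinduced G-module Hom_{ℤ[G']}(ℤ[G], A'). -/
open scoped TensorProduct

variable (G : Type*) [Group G] (H : Subgroup G)
  (A : Type*) [AddCommGroup A] [DistribMulAction H A]

/-- The set of balancing relations defining `ℤ[G] ⊗_{ℤ[H]} A` as a quotient of
`ℤ[G] ⊗_ℤ A`: the elements `(x·h) ⊗ a - x ⊗ (h·a)`. -/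
def IndRelSet : Set (MonoidAlgebra ℤ G ⊗[ℤ] A) :=
  {z | ∃ (x : MonoidAlgebra ℤ G) (h : H) (a : A),
    z = (x * MonoidAlgebra.single (h : G) 1) ⊗ₜ[ℤ] a - x ⊗ₜ[ℤ] (h • a)}

/-- The subgroup generated by the balancing relations. -/
noncomputable def IndSub : AddSubgroup (MonoidAlgebra ℤ G ⊗[ℤ] A) :=
  AddSubgroup.closure (IndRelSet G H A)

/-- The induced `G`-module `Ind_H^G A = ℤ[G] ⊗_{ℤ[H]} A`, realized as the quotient of
`ℤ[G] ⊗_ℤ A` by the balancing relations. -/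
noncomputable def Ind := (MonoidAlgebra ℤ G ⊗[ℤ] A) ⧸ IndSub G H A

noncomputable instance : AddCommGroup (Ind G H A) :=
  QuotientAddGroup.Quotient.addCommGroup _

/-- The action of `g : G` on `Ind_H^G A`, given by `σ(r ⊗ a) = (σ r) ⊗ a`. -/
noncomputable def indSmul (g : G) : Ind G H A →+ Ind G H A :=
  QuotientAddGroup.map (IndSub G H A) (IndSub G H A)
    (TensorProduct.map (LinearMap.mulLeft ℤ (MonoidAlgebra.single g 1))
      LinearMap.id).toAddMonoidHom
    (by
      refine (AddSubgroup.closure_le _).mpr ?_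
      rintro z ⟨x, h, a, rfl⟩
      simp only [SetLike.mem_coe, AddSubgroup.mem_comap]
      have : (TensorProduct.map (LinearMap.mulLeft ℤ (MonoidAlgebra.single g 1))
            LinearMap.id).toAddMonoidHom
            ((x * MonoidAlgebra.single (h : G) 1) ⊗ₜ[ℤ] a - x ⊗ₜ[ℤ] (h • a)) =
          ((MonoidAlgebra.single g 1 * x) * MonoidAlgebra.single (h : G) 1) ⊗ₜ[ℤ] a -
            (MonoidAlgebra.single g 1 * x) ⊗ₜ[ℤ] (h • a) := by
        simp [map_sub, mul_assoc]
      rw [this]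
      exact AddSubgroup.subset_closure ⟨MonoidAlgebra.single g 1 * x, h, a, rfl⟩)

/-- The coinduced `G`-module `Hom_{ℤ[H]}(ℤ[G], A)`: additive maps `ℤ[G] → A` that are
`H`-equivariant for the left `H`-action on `ℤ[G]` by left multiplication. -/
def Coind : AddSubgroup (MonoidAlgebra ℤ G →+ A) where
  carrier := {φ | ∀ (h : H) (x : MonoidAlgebra ℤ G),
    φ (MonoidAlgebra.single (h : G) 1 * x) = h • φ x}
  add_mem' := by
    intro φ ψ hφ hψ h x
    simp [hφ h x, hψ h x, smul_add]
  zero_mem' := by intro h x; simp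
  neg_mem' := by
    intro φ hφ h x
    simp [hφ h x]

/-- The action of `g : G` on the coinduced module, given by `(σ φ)(x) = φ(x σ)`. -/
noncomputable def coindSmul (g : G) (φ : Coind G H A) : Coind G H A :=
  ⟨(φ : MonoidAlgebra ℤ G →+ A).comp (AddMonoidHom.mulRight (MonoidAlgebra.single g 1)),
    by
      intro h x
      simp only [AddMonoidHom.comp_apply, AddMonoidHom.mulRight_apply, mul_assoc]
      exact φ.2 h _⟩

/-!
Let `P : ℤ[G] → End A` be the additive extension of `g ↦ (g • ·)` on `H` and `0` off `H`;
it satisfies `P (h x h') = h ∘ P x ∘ h'` for `h, h' ∈ H`. Hence `x ⊗ a ↦ (y ↦ P (y x) a)` is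
balanced, lands in `Hom_{ℤ[H]}(ℤ[G], A)` and is `G`-equivariant by associativity. For
representatives `t_c` of the finitely many cosets `c ∈ G ⧸ H`, its inverse is
`φ ↦ ∑_c t_c ⊗ φ (t_c⁻¹)`: in both composites only one coset survives, because
`P (t_c⁻¹ g) = 0` unless `c = gH`.
-/

open MonoidAlgebra (single single_mul_single)

section

variable {G H}

theorem QuotientGroup.out_inv_mul_mem_iff (c : G ⧸ H) (g : G) :
    c.out⁻¹ * g ∈ H ↔ c = g := by
  rw [← QuotientGroup.eq, QuotientGroup.out_eq']

theorem QuotientGroup.mul_out_mem_iff (g : G) (c : G ⧸ H) :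
    g * c.out ∈ H ↔ c = (g⁻¹ : G) := by
  rw [← inv_mem_iff, mul_inv_rev, out_inv_mul_mem_iff]

variable {R : Type*} [Ring R] (ρ : H →* R)

open Classical in
noncomputable def extendByZero (g : G) : R := if hg : g ∈ H then ρ ⟨g, hg⟩ else 0

theorem extendByZero_of_mem {g : G} (hg : g ∈ H) : extendByZero ρ g = ρ ⟨g, hg⟩ :=
  dif_pos hg

theorem extendByZero_of_notMem {g : G} (hg : g ∉ H) : extendByZero ρ g = 0 := dif_neg hg

theorem extendByZero_mul_left (h : H) (g : G) :
    extendByZero ρ (h * g) = ρ h * extendByZero ρ g := by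
  by_cases hg : g ∈ H
  · rw [extendByZero_of_mem ρ (mul_mem h.2 hg), extendByZero_of_mem ρ hg, ← map_mul]
    rfl
  · rw [extendByZero_of_notMem ρ hg, mul_zero,
      extendByZero_of_notMem ρ (by rwa [mul_mem_cancel_left h.2])]

theorem extendByZero_mul_right (g : G) (h : H) :
    extendByZero ρ (g * h) = extendByZero ρ g * ρ h := by
  by_cases hg : g ∈ H
  · rw [extendByZero_of_mem ρ (mul_mem hg h.2), extendByZero_of_mem ρ hg, ← map_mul]
    rfl
  · rw [extendByZero_of_notMem ρ hg, zero_mul,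
      extendByZero_of_notMem ρ (by rwa [mul_mem_cancel_right h.2])]

noncomputable def extendByZeroLift : MonoidAlgebra ℤ G →+ R :=
  MonoidAlgebra.liftNC (Int.castAddHom R) (extendByZero ρ)

theorem extendByZeroLift_single (g : G) (n : ℤ) :
    extendByZeroLift ρ (single g n) = n * extendByZero ρ g :=
  MonoidAlgebra.liftNC_single ..

theorem extendByZeroLift_single_mul (h : H) (x : MonoidAlgebra ℤ G) :
    extendByZeroLift ρ (single (h : G) 1 * x) = ρ h * extendByZeroLift ρ x := by
  induction x using MonoidAlgebra.induction_linear with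
  | zero => simp
  | add x y hx hy => rw [mul_add, map_add, map_add, hx, hy, mul_add]
  | single g n =>
    rw [single_mul_single, one_mul, extendByZeroLift_single, extendByZeroLift_single,
      extendByZero_mul_left, ← mul_assoc, ← mul_assoc, Int.cast_comm]

theorem extendByZeroLift_mul_single (x : MonoidAlgebra ℤ G) (h : H) :
    extendByZeroLift ρ (x * single (h : G) 1) = extendByZeroLift ρ x * ρ h := by
  induction x using MonoidAlgebra.induction_linear with
  | zero => simp
  | add x y hx hy => rw [add_mul, map_add, map_add, hx, hy, add_mul]
  | single g n =>
    rw [single_mul_single, mul_one, extendByZeroLift_single, extendByZeroLift_single,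
      extendByZero_mul_right, mul_assoc]

end

section Development

variable {G H A}

namespace Ind

noncomputable def mk : MonoidAlgebra ℤ G ⊗[ℤ] A →+ Ind G H A :=
  QuotientAddGroup.mk' (IndSub G H A)

theorem mk_mul_single_tmul (x : MonoidAlgebra ℤ G) (h : H) (a : A) :
    (mk ((x * single (h : G) 1) ⊗ₜ a) : Ind G H A) = mk (x ⊗ₜ (h • a)) :=
  (QuotientAddGroup.eq_iff_sub_mem ..).2 (AddSubgroup.subset_closure ⟨x, h, a, rfl⟩)

theorem mk_surjective : Function.Surjective (mk : MonoidAlgebra ℤ G ⊗[ℤ] A →+ Ind G H A) :=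
  QuotientAddGroup.mk'_surjective _

theorem induction_on {p : Ind G H A → Prop} (v : Ind G H A)
    (add : ∀ v w, p v → p w → p (v + w))
    (single_tmul : ∀ (g : G) (a : A), p (mk (single g 1 ⊗ₜ a))) : p v := by
  have zero : p 0 := by
    simpa only [TensorProduct.tmul_zero, map_zero] using single_tmul 1 0
  obtain ⟨z, rfl⟩ := mk_surjective v
  induction z using TensorProduct.induction_on with
  | zero => rwa [map_zero]
  | add z w hz hw => rw [map_add]; exact add _ _ hz hw
  | tmul x a =>
    induction x using MonoidAlgebra.induction_linear with
    | zero => rwa [TensorProduct.zero_tmul, map_zero]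
    | add x y hx hy => rw [TensorProduct.add_tmul, map_add]; exact add _ _ hx hy
    | single g n =>
      rw [← mul_one n, ← MonoidAlgebra.smul_single', TensorProduct.smul_tmul]
      exact single_tmul g (n • a)

end Ind

theorem indSmul_mk_tmul (g : G) (x : MonoidAlgebra ℤ G) (a : A) :
    indSmul G H A g (Ind.mk (x ⊗ₜ a)) = Ind.mk ((single g 1 * x) ⊗ₜ a) :=
  rfl

theorem coindSmul_add (g : G) (φ ψ : Coind G H A) :
    coindSmul G H A g (φ + ψ) = coindSmul G H A g φ + coindSmul G H A g ψ :=
  rfl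

variable (H A) in
noncomputable def restrictSMul : MonoidAlgebra ℤ G →+ A →+ A :=
  extendByZeroLift (DistribMulAction.toAddMonoidEnd H A)

theorem restrictSMul_single_of_mem {g : G} (hg : g ∈ H) (a : A) :
    restrictSMul H A (single g 1) a = (⟨g, hg⟩ : H) • a := by
  have := extendByZeroLift_single (DistribMulAction.toAddMonoidEnd H A) g 1
  rw [extendByZero_of_mem _ hg, Int.cast_one, one_mul] at this
  exact congrArg (fun f : AddMonoid.End A => f a) this

theorem restrictSMul_single_of_notMem {g : G} (hg : g ∉ H) (n : ℤ) :
    restrictSMul H A (single g n) = 0 := by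
  have := extendByZeroLift_single (DistribMulAction.toAddMonoidEnd H A) g n
  rwa [extendByZero_of_notMem _ hg, mul_zero] at this

theorem restrictSMul_single_mul (h : H) (x : MonoidAlgebra ℤ G) (a : A) :
    restrictSMul H A (single (h : G) 1 * x) a = h • restrictSMul H A x a :=
  congrArg (fun f : AddMonoid.End A => f a) (extendByZeroLift_single_mul _ h x)

theorem restrictSMul_mul_single (x : MonoidAlgebra ℤ G) (h : H) (a : A) :
    restrictSMul H A (x * single (h : G) 1) a = restrictSMul H A x (h • a) :=
  congrArg (fun f : AddMonoid.End A => f a) (extendByZeroLift_mul_single _ x h)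

variable (H) in
noncomputable def tmulToCoind (x : MonoidAlgebra ℤ G) : A →+ Coind G H A :=
  AddMonoidHom.codRestrict ((restrictSMul H A).comp (AddMonoidHom.mulRight x)).flip _
    fun a h y => by simp only [AddMonoidHom.flip_apply, AddMonoidHom.comp_apply,
      AddMonoidHom.mulRight_apply, mul_assoc, restrictSMul_single_mul]

theorem tmulToCoind_apply (x : MonoidAlgebra ℤ G) (a : A) (y : MonoidAlgebra ℤ G) :
    (tmulToCoind H x a : MonoidAlgebra ℤ G →+ A) y = restrictSMul H A (y * x) a :=
  rfl

variable (H A) in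
noncomputable def indToCoindTensor : MonoidAlgebra ℤ G ⊗[ℤ] A →+ Coind G H A :=
  TensorProduct.liftAddHom
    (AddMonoidHom.mk' (tmulToCoind H) fun x x' => AddMonoidHom.ext fun a =>
      Subtype.ext <| AddMonoidHom.ext fun y => by
        simp only [tmulToCoind_apply, mul_add, map_add]; rfl)
    fun n x a => by rw [map_zsmul, map_zsmul]; rfl

noncomputable def indToCoind : Ind G H A →+ Coind G H A :=
  QuotientAddGroup.lift (IndSub G H A) (indToCoindTensor H A) <| by
    refine (AddSubgroup.closure_le _).2 ?_
    rintro _ ⟨x, h, a, rfl⟩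
    refine AddMonoidHom.mem_ker.2 ?_
    rw [map_sub, sub_eq_zero]
    refine Subtype.ext (AddMonoidHom.ext fun y => ?_)
    exact (congrArg (restrictSMul H A · a) (mul_assoc y x _).symm).trans
      (restrictSMul_mul_single _ h a)

theorem indToCoind_mk_tmul_apply (x : MonoidAlgebra ℤ G) (a : A) (y : MonoidAlgebra ℤ G) :
    (indToCoind (Ind.mk (x ⊗ₜ a) : Ind G H A) : MonoidAlgebra ℤ G →+ A) y =
      restrictSMul H A (y * x) a :=
  rfl

theorem indToCoind_indSmul (g : G) (v : Ind G H A) :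
    indToCoind (indSmul G H A g v) = coindSmul G H A g (indToCoind v) := by
  induction v using Ind.induction_on with
  | add v w hv hw => rw [map_add, map_add, hv, hw, map_add, coindSmul_add]
  | single_tmul k a =>
    refine Subtype.ext (AddMonoidHom.ext fun y => ?_)
    rw [indSmul_mk_tmul]
    exact congrArg (restrictSMul H A · a) (mul_assoc y _ _).symm

section Finite

variable [Fintype (G ⧸ H)]

noncomputable def coindToInd : Coind G H A →+ Ind G H A :=
  AddMonoidHom.mk'
    (fun φ => ∑ c : G ⧸ H,
      Ind.mk (single c.out 1 ⊗ₜ (φ : MonoidAlgebra ℤ G →+ A) (single c.out⁻¹ 1)))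
    fun φ ψ => by
      simp only [AddSubgroup.coe_add, AddMonoidHom.add_apply, TensorProduct.tmul_add, map_add,
        Finset.sum_add_distrib]

theorem coindToInd_apply (φ : Coind G H A) :
    coindToInd φ = ∑ c : G ⧸ H,
      Ind.mk (single c.out 1 ⊗ₜ (φ : MonoidAlgebra ℤ G →+ A) (single c.out⁻¹ 1)) :=
  rfl

theorem coindToInd_indToCoind (v : Ind G H A) : coindToInd (indToCoind v) = v := by
  induction v using Ind.induction_on with
  | add v w hv hw => rw [map_add, map_add, hv, hw]
  | single_tmul g a =>
    have hg : (QuotientGroup.mk g : G ⧸ H).out⁻¹ * g ∈ H :=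
      (QuotientGroup.out_inv_mul_mem_iff _ g).2 rfl
    refine (Finset.sum_eq_single_of_mem (g : G ⧸ H) (Finset.mem_univ _)
      fun c _ hc => ?_).trans ?_
    · rw [indToCoind_mk_tmul_apply, single_mul_single, one_mul,
        restrictSMul_single_of_notMem (mt (QuotientGroup.out_inv_mul_mem_iff c g).1 hc),
        AddMonoidHom.zero_apply, TensorProduct.tmul_zero, map_zero]
    · rw [indToCoind_mk_tmul_apply, single_mul_single, one_mul, restrictSMul_single_of_mem hg,
        ← Ind.mk_mul_single_tmul, single_mul_single, mul_one, mul_inv_cancel_left]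

theorem indToCoind_coindToInd (φ : Coind G H A) : indToCoind (coindToInd φ) = φ := by
  refine Subtype.ext (MonoidAlgebra.addHom_ext' fun g => AddMonoidHom.ext_int ?_)
  have hg : g * (QuotientGroup.mk g⁻¹ : G ⧸ H).out ∈ H :=
    (QuotientGroup.mul_out_mem_iff g _).2 rfl
  rw [AddMonoidHom.comp_apply, AddMonoidHom.comp_apply, MonoidAlgebra.singleAddHom_apply,
    coindToInd_apply, map_sum, AddSubgroup.val_finsetSum, AddMonoidHom.finsetSum_apply]
  refine (Finset.sum_eq_single_of_mem ((g⁻¹ : G) : G ⧸ H) (Finset.mem_univ _)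
    fun c _ hc => ?_).trans ?_
  · rw [indToCoind_mk_tmul_apply, single_mul_single, one_mul,
      restrictSMul_single_of_notMem (mt (QuotientGroup.mul_out_mem_iff g c).1 hc),
      AddMonoidHom.zero_apply]
  · rw [indToCoind_mk_tmul_apply, single_mul_single, one_mul, restrictSMul_single_of_mem hg,
      ← φ.2, single_mul_single, one_mul, mul_inv_cancel_right]

end Finite

end Development

/-- If `G'` is a subgroup of finite index in `G` and `A` is a `G'`-module, then the induced
`G`-module `ℤ[G] ⊗_{ℤ[G']} A` is isomorphic, as a `G`-module, to the coinduced `G`-module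
`Hom_{ℤ[G']}(ℤ[G], A)`. -/
theorem ind_iso_coind [H.FiniteIndex] :
    ∃ e : Ind G H A ≃+ Coind G H A,
      ∀ (g : G) (v : Ind G H A), e (indSmul G H A g v) = coindSmul G H A g (e v) := by
  have : Fintype (G ⧸ H) := H.fintypeQuotientOfFiniteIndex
  exact ⟨{ indToCoind with
    invFun := coindToInd
    left_inv := coindToInd_indToCoind
    right_inv := indToCoind_coindToInd }, indToCoind_indSmul⟩
end
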